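/- arXiv:2504.02985 — 3 statements merged into one kernel-verified Lean document; each statement's English description precedes it below -/
import Mathlib

section
/- In the category of relational G-sets, define the diamond operator on relational subsets: for a subobject S of X × Z, ◇S = { (x,z) : ∃ x' with x k x' for some edge-path step and (x',z) ∈ S }, where the modal step is taken in the first coordinate. Then for a quotient map q : X → Y (surjective and edge-lifting) and any relational subset S of Y × Z, ◇S ≤ ∃_{q×1_Z} ◇ (q×1_Z)^* S. -/
open Function Set

/-- The diamond operator on subsets of `W × Z`, taken in the first coordinate via the
relation `R` on `W`. -/
def dia {W Z : Type} (R : W → W → Prop) (S : Set (W × Z)) : Set (W × Z) :=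
  {p | ∃ w', R p.1 w' ∧ (w', p.2) ∈ S}

/-- For a quotient map `q : X → Y` (surjective, relation-preserving and edge-lifting) and any
subset `S ⊆ Y × Z`, we have `◇S ≤ ∃_{q×1_Z} ◇ (q×1_Z)^* S`. -/
theorem dia_le_image_dia_preimage {X Y Z : Type}
    (RX : X → X → Prop) (RY : Y → Y → Prop)
    (q : X → Y)
    (hsurj : Surjective q)
    (hpres : ∀ a b, RX a b → RY (q a) (q b))
    (hlift : ∀ s t, RY s t → ∃ s' t', RX s' t' ∧ q s' = s ∧ q t' = t)
    (S : Set (Y × Z)) :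
    dia RY S ⊆ (fun p : X × Z => (q p.1, p.2)) '' dia RX ((fun p : X × Z => (q p.1, p.2)) ⁻¹' S) := by
  rintro ⟨y, z⟩ ⟨y', hyy', hS⟩
  obtain ⟨s', t', hst, hs, ht⟩ := hlift y y' hyy'
  exact ⟨(s', z), ⟨t', hst, by simp [ht, hS]⟩, by simp [hs]⟩
end

section
/- Let E be a Boolean algebra-valued subobject doctrine on a category with finite products, equipped with a diamond operator ◇ on each Sub(X) satisfying ◇(A ∨ B) = ◇A ∨ ◇B and ◇⊥ = ⊥, and commuting with pullback along product projections. If ι_A : A ↪ A+B and ι_B : B ↪ A+B are complemented subobjects with ◇A ≤ A and ◇B ≤ B (diamonds taken in Sub(A+B)), then ι_A is open: ι_A^* ◇S = ◇ ι_A^* S for every subobject S of A+B. -/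
/-- Openness of a complemented summand inclusion in a Boolean-algebra-valued subobject
doctrine equipped with a diamond operator.

`L` plays the role of `Sub(A+B)` and `K` of `Sub(A)`; `pull` is `ι_A^*`, `ex` is `∃_{ι_A}`
and `dia` is `◇` on `Sub(A+B)`. The subobject `A` is the element `a : L`, with complement
`aᶜ` the subobject `B`. The diamond on the subspace `A` is `◇_A T = ι_A^* ◇ ∃_{ι_A} T`. -/
theorem summand_inclusion_open {L K : Type} [BooleanAlgebra L] [BooleanAlgebra K]
    (pull : L → K) (ex : K → L) (dia : L → L)
    -- ◇ preserves ⊥ and binary joins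
    (hdia_bot : dia ⊥ = ⊥)
    (hdia_sup : ∀ x y : L, dia (x ⊔ y) = dia x ⊔ dia y)
    -- ◇ commutes with pullback along product projections is subsumed in this fibered setting
    -- by the Frobenius-type identities below.
    -- ι_A^* is a morphism of Boolean algebras (pullback functor on subobjects):
    (hpull_sup : ∀ x y : L, pull (x ⊔ y) = pull x ⊔ pull y)
    (hpull_inf : ∀ x y : L, pull (x ⊓ y) = pull x ⊓ pull y)
    (hpull_bot : pull ⊥ = ⊥)
    (hpull_top : pull ⊤ = ⊤)
    (hpull_mono : Monotone pull)
    -- the complemented subobjects A and B = Aᶜ satisfy ◇A ≤ A and ◇B ≤ B: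
    (a : L) (hA : dia a ≤ a) (hB : dia aᶜ ≤ aᶜ)
    -- ∃_{ι_A} ι_A^* S = S ∧ A (the subspace condition), and ι_A^* ∃_{ι_A} T = T (ι_A mono),
    -- and ι_A^*(B) = ⊥ (A and B are disjoint):
    (hfrob : ∀ S : L, ex (pull S) = S ⊓ a)
    (hsection : ∀ T : K, pull (ex T) = T)
    (hdisj : pull aᶜ = ⊥) :
    -- ι_A is open: ι_A^* ◇ S = ◇_A (ι_A^* S) where ◇_A T = ι_A^* ◇ ∃_{ι_A} T
    ∀ S : L, pull (dia S) = pull (dia (ex (pull S))) := by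
  intro S
  have hmono : Monotone dia := by
    intro x y hxy
    calc dia x ≤ dia x ⊔ dia y := le_sup_left
      _ = dia (x ⊔ y) := (hdia_sup _ _).symm
      _ = dia y := by rw [sup_eq_right.mpr hxy]
  have hS : S = (S ⊓ a) ⊔ (S ⊓ aᶜ) := by
    rw [← inf_sup_left, sup_compl_eq_top, inf_top_eq]
  have h2 : pull (dia (S ⊓ aᶜ)) = ⊥ := by
    have : dia (S ⊓ aᶜ) ≤ aᶜ := le_trans (hmono inf_le_right) hB
    have := hpull_mono this
    rw [hdisj] at this
    exact le_bot_iff.mp this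
  calc pull (dia S) = pull (dia ((S ⊓ a) ⊔ (S ⊓ aᶜ))) := by rw [← hS]
    _ = pull (dia (S ⊓ a)) ⊔ pull (dia (S ⊓ aᶜ)) := by rw [hdia_sup, hpull_sup]
    _ = pull (dia (S ⊓ a)) := by rw [h2, sup_bot_eq]
    _ = pull (dia (ex (pull S))) := by rw [hfrob]
end

section
/- In the category of sets with a binary relation, the pullback of a regular epimorphism along any morphism is a regular epimorphism. -/
/-!
The regular epimorphisms of `BRel` are exactly the surjections that lift related pairs: a
coequalizer factors through the image relation, and conversely such a map is the coequalizer of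
its fibre pairs. Surjectivity and lifting of related pairs are the lifting properties against the
point and against the free related pair, and any lifting property against a fixed object is
inherited by pullbacks.
-/

open CategoryTheory Limits Function

/-- A set equipped with a binary relation. -/
structure BRel where
  carrier : Type
  rel : carrier → carrier → Prop

/-- The category of sets with a binary relation and relation-preserving functions. -/
instance : Category BRel where
  Hom X Y := {f : X.carrier → Y.carrier // ∀ a b, X.rel a b → Y.rel (f a) (f b)}
  id X := ⟨id, fun _ _ h => h⟩
  comp f g := ⟨g.1 ∘ f.1, fun a b h => g.2 _ _ (f.2 a b h)⟩
  id_comp _ := rfl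
  comp_id _ := rfl
  assoc _ _ _ := rfl

namespace BRel

@[ext]
lemma hom_ext {X Y : BRel} {f g : X ⟶ Y} (h : f.1 = g.1) : f = g := Subtype.ext h

def discrete (α : Type) : BRel := ⟨α, fun _ _ => False⟩

def indiscrete (α : Type) : BRel := ⟨α, fun _ _ => True⟩

/-- Morphisms `arrow ⟶ X` are the related pairs of `X`, as morphisms `discrete PUnit ⟶ X` are
its points. -/
def arrow : BRel := ⟨Bool, fun i j => i = false ∧ j = true⟩

variable {X Y : BRel}

def ofDiscrete {α : Type} (φ : α → X.carrier) : discrete α ⟶ X := ⟨φ, fun _ _ h => h.elim⟩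

def toIndiscrete {α : Type} (φ : X.carrier → α) : X ⟶ indiscrete α := ⟨φ, fun _ _ _ => trivial⟩

def ofRel {s t : X.carrier} (hst : X.rel s t) : arrow ⟶ X :=
  ⟨fun i => cond i t s, by rintro _ _ ⟨rfl, rfl⟩; exact hst⟩

def LiftsRel (f : X ⟶ Y) : Prop :=
  ∀ s t, Y.rel s t → ∃ a b, X.rel a b ∧ f.1 a = s ∧ f.1 b = t

lemma epi_of_surjective (f : X ⟶ Y) (hf : Surjective f.1) : Epi f :=
  ⟨fun _ _ h => hom_ext (hf.injective_comp_right (congrArg Subtype.val h))⟩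

lemma surjective_of_epi (f : X ⟶ Y) [Epi f] : Surjective f.1 := by
  have h : f ≫ toIndiscrete (· ∈ Set.range f.1) = f ≫ toIndiscrete fun _ => True := by
    ext x
    exact eq_true ⟨x, rfl⟩
  intro y
  exact of_eq_true (congrFun (congrArg Subtype.val ((cancel_epi f).mp h)) y)

lemma surjective_iff_exists_lift_discrete (f : X ⟶ Y) :
    Surjective f.1 ↔ ∀ a : discrete PUnit ⟶ Y, ∃ l, l ≫ f = a := by
  refine ⟨fun hf a => ⟨ofDiscrete fun u => surjInv hf (a.1 u), ?_⟩, fun h y => ?_⟩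
  · ext u
    exact surjInv_eq hf (a.1 u)
  · obtain ⟨l, hl⟩ := h (ofDiscrete fun _ => y)
    exact ⟨l.1 PUnit.unit, congrFun (congrArg Subtype.val hl) PUnit.unit⟩

lemma liftsRel_iff_exists_lift_arrow (f : X ⟶ Y) :
    LiftsRel f ↔ ∀ a : arrow ⟶ Y, ∃ l, l ≫ f = a := by
  refine ⟨fun hf a => ?_, fun h s t hst => ?_⟩
  · obtain ⟨x₀, x₁, hx, h₀, h₁⟩ := hf _ _ (a.2 false true ⟨rfl, rfl⟩)
    refine ⟨ofRel hx, ?_⟩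
    ext (_ | _)
    exacts [h₀, h₁]
  · obtain ⟨l, hl⟩ := h (ofRel hst)
    exact ⟨l.1 false, l.1 true, l.2 _ _ ⟨rfl, rfl⟩,
      congrFun (congrArg Subtype.val hl) false, congrFun (congrArg Subtype.val hl) true⟩

lemma liftsRel_of_regularEpi (f : X ⟶ Y) (hf : RegularEpi f) : LiftsRel f := by
  have := hf.epi f
  have hsurj := surjective_of_epi f
  let imageRel : BRel := ⟨Y.carrier, fun s t => ∃ a b, X.rel a b ∧ f.1 a = s ∧ f.1 b = t⟩
  let f' : X ⟶ imageRel := ⟨f.1, fun a b h => ⟨a, b, h, rfl, rfl⟩⟩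
  have hw : hf.left ≫ f' = hf.right ≫ f' :=
    hom_ext (show (hf.left ≫ f).1 = (hf.right ≫ f).1 from congrArg Subtype.val hf.w)
  let k : Y ⟶ imageRel := Cofork.IsColimit.desc hf.isColimit f' hw
  have hk : ∀ y, k.1 y = y := hsurj.forall.mpr fun x =>
    congrFun (congrArg Subtype.val (Cofork.IsColimit.π_desc' hf.isColimit f' hw)) x
  intro s t hst
  simpa only [hk] using k.2 s t hst

/-- A cofork only sees underlying maps, so the pairs in a fibre need not be related. -/
def fiberPairs (f : X ⟶ Y) : BRel := discrete {p : X.carrier × X.carrier // f.1 p.1 = f.1 p.2}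

def fiberPairs.fst (f : X ⟶ Y) : fiberPairs f ⟶ X := ofDiscrete fun p => p.1.1

def fiberPairs.snd (f : X ⟶ Y) : fiberPairs f ⟶ X := ofDiscrete fun p => p.1.2

lemma fiberPairs.π_apply_eq {f : X ⟶ Y} (c : Cofork (fiberPairs.fst f) (fiberPairs.snd f))
    {a b : X.carrier} (hab : f.1 a = f.1 b) : c.π.1 a = c.π.1 b :=
  congrFun (congrArg Subtype.val c.condition) ⟨(a, b), hab⟩

noncomputable def regularEpiOfSurjective (f : X ⟶ Y) (hs : Surjective f.1) (hl : LiftsRel f) :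
    RegularEpi f where
  W := fiberPairs f
  left := fiberPairs.fst f
  right := fiberPairs.snd f
  w := hom_ext (funext fun p => p.2)
  isColimit := by
    have hfac (c : Cofork (fiberPairs.fst f) (fiberPairs.snd f)) (x : X.carrier) :
        c.π.1 (surjInv hs (f.1 x)) = c.π.1 x :=
      fiberPairs.π_apply_eq c (surjInv_eq hs (f.1 x))
    refine Cofork.IsColimit.mk _ (fun c => ⟨c.π.1 ∘ surjInv hs, fun s t hst => ?_⟩)
      (fun c => hom_ext (funext (hfac c)))
      (fun c m hm => (epi_of_surjective f hs).left_cancellation _ _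
        (hm.trans (hom_ext (funext (hfac c))).symm))
    obtain ⟨a, b, hab, rfl, rfl⟩ := hl s t hst
    change c.pt.rel (c.π.1 (surjInv hs (f.1 a))) (c.π.1 (surjInv hs (f.1 b)))
    rw [hfac, hfac]
    exact c.π.2 a b hab

end BRel

lemma CategoryTheory.IsPullback.exists_lift_snd {C : Type*} [Category C] {P X Y Z A : C}
    {fst : P ⟶ X} {snd : P ⟶ Y} {q : X ⟶ Z} {g : Y ⟶ Z} (h : IsPullback fst snd q g)
    (hq : ∀ a : A ⟶ Z, ∃ l, l ≫ q = a) (b : A ⟶ Y) : ∃ l, l ≫ snd = b := by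
  obtain ⟨l, hl⟩ := hq (b ≫ g)
  exact ⟨h.lift l b hl, h.lift_snd l b hl⟩

/-- In sets with a binary relation, the pullback of a regular epimorphism along any
morphism is a regular epimorphism. -/
theorem pullback_regularEpi (X Y Z P : BRel) (q : X ⟶ Z) (g : Y ⟶ Z) (hq : RegularEpi q)
    (fst : P ⟶ X) (snd : P ⟶ Y) (h : IsPullback fst snd q g) :
    Nonempty (RegularEpi snd) := by
  have := hq.epi q
  have hq_points := (BRel.surjective_iff_exists_lift_discrete q).mp (BRel.surjective_of_epi q)
  have hq_pairs := (BRel.liftsRel_iff_exists_lift_arrow q).mp (BRel.liftsRel_of_regularEpi q hq)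
  exact ⟨BRel.regularEpiOfSurjective snd
    ((BRel.surjective_iff_exists_lift_discrete snd).mpr (h.exists_lift_snd hq_points))
    ((BRel.liftsRel_iff_exists_lift_arrow snd).mpr (h.exists_lift_snd hq_pairs))⟩
end
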